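/- Let C be a Calabi–Yau triangulated category of CY-dimension 2 with a cluster-tilting object T and let Γ = End_C(T). Then the functor F = Hom_C(T,−): C → mod Γ induces an equivalence of categories C/add(ST) ≃ mod Γ. Moreover, F induces an equivalence from add T to the category of projective modules in mod Γ. -/

import Mathlib

set_option linter.unusedVariables false
set_option linter.unusedSectionVars false

open CategoryTheory Limits Pretriangulated

universe v u u₂

namespace CYPaper

section Triangulated
variable (k : Type*) [Field k]
variable (C : Type u) [Category.{v} C] [Preadditive C] [Linear k C]
  [HasZeroObject C] [HasShift C ℤ] [∀ n : ℤ, (shiftFunctor C n).Additive]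
  [Pretriangulated C] [IsTriangulated C]
  [IsIdempotentComplete C] [HasFiniteBiproducts C]
  [∀ X Y : C, FiniteDimensional k (X ⟶ Y)]

/-- The data of a Serre functor on the `k`-linear category `C`: an autoequivalence `Fun`
together with bifunctorial isomorphisms `Hom(X,Y) ≅ D Hom(Y, Fun X)`. -/
structure SerreData where
  Fun : C ⥤ C
  isEquiv : Fun.IsEquivalence
  eta : ∀ X Y : C, (X ⟶ Y) ≃ₗ[k] Module.Dual k (Y ⟶ Fun.obj X)
  nat_left : ∀ {X X' Y : C} (f : X' ⟶ X) (φ : X ⟶ Y) (g : Y ⟶ Fun.obj X'),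
    eta X' Y (f ≫ φ) g = eta X Y φ (g ≫ Fun.map f)
  nat_right : ∀ {X Y Y' : C} (φ : X ⟶ Y) (h : Y ⟶ Y') (g : Y' ⟶ Fun.obj X),
    eta X Y' (φ ≫ h) g = eta X Y φ (h ≫ g)

/-- `C` is Calabi–Yau of CY-dimension `2` relative to the Serre functor `S`:
there is an isomorphism of functors `S² ≅ Σ`. -/
def IsCY2 (S : SerreData k C) : Prop := Nonempty (shiftFunctor C (2 : ℤ) ≅ S.Fun)

variable {C}

/-- `X` belongs to `add T`: it is a direct summand of a finite direct sum of copies of `T`. -/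
def inAdd (T X : C) : Prop :=
  ∃ (n : ℕ) (s : X ⟶ ⨁ (fun _ : Fin n => T)) (r : (⨁ fun _ : Fin n => T) ⟶ X),
    s ≫ r = 𝟙 X

/-- `T` is a cluster-tilting object of `C`: `Ext¹(T,T) = 0` and any object `X` with
`Hom(X, ST) = 0` lies in `add T`. -/
def IsClusterTilting (T : C) : Prop :=
  (∀ f : T ⟶ T⟦(1 : ℤ)⟧, f = 0) ∧
  ∀ X : C, (∀ f : X ⟶ T⟦(1 : ℤ)⟧, f = 0) → inAdd T X

/-- `Hom(T,X)` is a right module over `Γ = End T`, i.e. a left module over `(End T)ᵐᵒᵖ`,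
by precomposition. -/
instance homModule (T X : C) : Module (End T)ᵐᵒᵖ (T ⟶ X) where
  smul φ f := φ.unop ≫ f
  one_smul f := Category.id_comp f
  mul_smul a b f := Category.assoc a.unop b.unop f
  smul_zero a := comp_zero
  smul_add a f g := Preadditive.comp_add _ _ _ _ _ _
  add_smul a b f := Preadditive.add_comp _ _ _ _ _ _
  zero_smul f := zero_comp

/-- The functor `F = Hom_C(T,−) : C ⥤ mod Γ`, where `Γ = End T` and `mod Γ` is realized
as (left) modules over `(End T)ᵐᵒᵖ` (i.e. right `End T`-modules). -/
def homFunctor (T : C) : C ⥤ ModuleCat.{v} (End T)ᵐᵒᵖ where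
  obj X := ModuleCat.of _ (T ⟶ X)
  map f :=
    ModuleCat.ofHom
    { toFun := fun g => g ≫ f
      map_add' := fun g h => Preadditive.add_comp _ _ _ _ _ _
      map_smul' := fun a g => Category.assoc a.unop g f }
  map_id X := by ext g; exact Category.comp_id g
  map_comp f g := by ext h; exact (Category.assoc _ _ _).symm

end Triangulated

section Quot
variable {C : Type u} [Category.{v} C] [Preadditive C] [HasShift C ℤ] [HasFiniteBiproducts C]

/-- The ideal of morphisms factoring through `add (ST)`, as a `HomRel` on `C`:
two morphisms are related if their difference factors through `add (ST)`. -/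
def addSTRel (T : C) : HomRel C := fun X Y f g =>
  ∃ (Z : C) (u : X ⟶ Z) (v : Z ⟶ Y), inAdd (T⟦(1 : ℤ)⟧) Z ∧ u ≫ v = f - g

end Quot

/-!
Every object `X` sits in a triangle `W ⟶ B ⟶ X ⟶ W⟦1⟧` in which `B` is a finite sum of copies
of `T` whose maps from `T` cover `Hom(T, X)`. Applying `Hom(T, -)` gives `Hom(T, W⟦1⟧) = 0`, hence
`Hom(W, T⟦1⟧) = 0` by 2-Calabi–Yau duality, and `W ∈ add T` because `T` is cluster tilting.
`Hom(T, -)` is fully faithful on `add T`, so these triangles make it full on `C`, with kernel the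
maps factoring through `W⟦1⟧ ∈ add (T⟦1⟧)`. A finite `Γ`-module is finitely presented since `Γ` is
finite-dimensional; lifting a presentation `Γᵐ ⟶ Γⁿ` to a map `Tᵐ ⟶ Tⁿ`, its cone `X` has
`Hom(T, X)` equal to the cokernel because `Hom(T, Tᵐ⟦1⟧) = 0`. A finite projective module is the
image of an idempotent of some `Γⁿ = Hom(T, Tⁿ)`, which lifts to an idempotent of `Tⁿ` and splits.
-/

lemma exists_isEquivalence_quotient_lift {A B : Type*} [Category A] [Category B] (r : HomRel A)
    (L : A ⥤ B) [L.Full] [L.EssSurj] (hr : ∀ ⦃X Y : A⦄ (f g : X ⟶ Y), r f g ↔ L.map f = L.map g) :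
    ∃ Lbar : CategoryTheory.Quotient r ⥤ B,
      Nonempty (CategoryTheory.Quotient.functor r ⋙ Lbar ≅ L) ∧ Lbar.IsEquivalence := by
  obtain rfl : r = L.homRel := by
    funext X Y f g
    exact propext (hr f g)
  exact ⟨_, ⟨Quotient.lift.isLift _ _ _⟩, inferInstance⟩

lemma essSurj_lift_of_exists_iso {A B : Type*} [Category A] [Category B] (P : ObjectProperty B)
    (F : A ⥤ B) (hF : ∀ X, P (F.obj X)) (h : ∀ Y, P Y → ∃ X, Nonempty (F.obj X ≅ Y)) :
    (P.lift F hF).EssSurj where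
  mem_essImage Y :=
    have ⟨X, ⟨e⟩⟩ := h Y.obj Y.property
    ⟨X, ⟨(ObjectProperty.ι P).preimageIso e⟩⟩

lemma LinearMap.nonempty_linearEquiv_of_ker_eq {R N M₁ M₂ : Type*} [Ring R]
    [AddCommGroup N] [AddCommGroup M₁] [AddCommGroup M₂] [Module R N] [Module R M₁] [Module R M₂]
    (a : N →ₗ[R] M₁) (b : N →ₗ[R] M₂) (ha : Function.Surjective a) (hb : Function.Surjective b)
    (h : LinearMap.ker a = LinearMap.ker b) : Nonempty (M₁ ≃ₗ[R] M₂) :=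
  ⟨(a.quotKerEquivOfSurjective ha).symm ≪≫ₗ Submodule.quotEquivOfEq _ _ h ≪≫ₗ
    b.quotKerEquivOfSurjective hb⟩

section Additive

variable {C : Type u} [Category.{v} C] [Preadditive C]

@[simps]
def postcompLinearMap (T : C) {X Y : C} (f : X ⟶ Y) : (T ⟶ X) →ₗ[(End T)ᵐᵒᵖ] (T ⟶ Y) where
  toFun t := t ≫ f
  map_add' t t' := Preadditive.add_comp _ _ _ _ _ _
  map_smul' a t := Category.assoc _ _ _

lemma homFunctor_map_eq_iff (T : C) {X Y : C} (f g : X ⟶ Y) :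
    (homFunctor T).map f = (homFunctor T).map g ↔ ∀ t : T ⟶ X, t ≫ f = t ≫ g :=
  ⟨fun h t => LinearMap.congr_fun (congrArg ModuleCat.Hom.hom h) t, fun h => by ext t; exact h t⟩

lemma linearMap_apply_comp {T X Y : C} (φ : (T ⟶ X) →ₗ[(End T)ᵐᵒᵖ] (T ⟶ Y)) (a : T ⟶ T)
    (x : T ⟶ X) : φ (a ≫ x) = a ≫ φ x :=
  φ.map_smul (MulOpposite.op a) x

variable [HasFiniteBiproducts C]

lemma inAdd_biproduct (T : C) (n : ℕ) : inAdd T (⨁ fun _ : Fin n => T) :=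
  ⟨n, 𝟙 _, 𝟙 _, Category.comp_id _⟩

lemma inAdd.map {D : Type*} [Category D] [Preadditive D] [HasFiniteBiproducts D] (F : C ⥤ D)
    [F.Additive] {T X : C} (h : inAdd T X) : inAdd (F.obj T) (F.obj X) := by
  obtain ⟨n, s, r, hsr⟩ := h
  refine ⟨n, F.map s ≫ (F.mapBiproduct _).hom, (F.mapBiproduct _).inv ≫ F.map r, ?_⟩
  rw [Category.assoc, Iso.hom_inv_id_assoc, ← F.map_comp, hsr, F.map_id]

lemma eq_zero_of_inAdd {U V Z : C} (hUV : ∀ f : U ⟶ V, f = 0) (hZ : inAdd V Z) (t : U ⟶ Z) :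
    t = 0 := by
  obtain ⟨n, s, r, hsr⟩ := hZ
  have hs : t ≫ s = 0 := biproduct.hom_ext _ _ fun i => by simpa using hUV (t ≫ s ≫ biproduct.π _ i)
  rw [← Category.comp_id t, ← hsr, ← Category.assoc, hs, zero_comp]

lemma ext_of_inAdd {T B X : C} (hB : inAdd T B) {g g' : B ⟶ X}
    (h : ∀ t : T ⟶ B, t ≫ g = t ≫ g') : g = g' := by
  obtain ⟨n, s, r, hsr⟩ := hB
  have hr : r ≫ g = r ≫ g' :=
    biproduct.hom_ext' _ _ fun i => by simpa using h (biproduct.ι (fun _ : Fin n => T) i ≫ r)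
  rw [← Category.id_comp g, ← Category.id_comp g', ← hsr, Category.assoc, Category.assoc, hr]

lemma exists_comp_eq_of_inAdd {T B X : C} (hB : inAdd T B)
    (φ : (T ⟶ B) →ₗ[(End T)ᵐᵒᵖ] (T ⟶ X)) : ∃ g : B ⟶ X, ∀ t, t ≫ g = φ t := by
  obtain ⟨n, s, r, hsr⟩ := hB
  have hdesc : ∀ w : T ⟶ ⨁ fun _ : Fin n => T,
      w ≫ biproduct.desc (fun i => φ (biproduct.ι (fun _ : Fin n => T) i ≫ r)) = φ (w ≫ r) := by
    intro w
    calc w ≫ biproduct.desc (fun i => φ (biproduct.ι (fun _ : Fin n => T) i ≫ r))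
        = ∑ i, φ ((w ≫ biproduct.π _ i) ≫ biproduct.ι (fun _ : Fin n => T) i ≫ r) := by
          simp only [linearMap_apply_comp]
          simp only [biproduct.desc_eq, Preadditive.comp_sum, Category.assoc]
      _ = φ (w ≫ r) := by
          rw [← map_sum]
          simp only [← Category.assoc, ← Preadditive.sum_comp]
          simp only [Category.assoc, ← Preadditive.comp_sum, biproduct.total, Category.comp_id]
  exact ⟨s ≫ biproduct.desc fun i => φ (biproduct.ι (fun _ : Fin n => T) i ≫ r), fun t => by
    rw [← Category.assoc, hdesc, Category.assoc, hsr, Category.comp_id]⟩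

instance (T : C) : (ObjectProperty.ι (fun X : C => inAdd T X) ⋙ homFunctor T).Full where
  map_surjective {X Y} φ := by
    obtain ⟨g, hg⟩ := exists_comp_eq_of_inAdd X.property φ.hom
    exact ⟨ObjectProperty.homMk g, by ext t; exact hg t⟩

instance (T : C) : (ObjectProperty.ι (fun X : C => inAdd T X) ⋙ homFunctor T).Faithful where
  map_injective {X Y f g} h := by
    ext1
    exact ext_of_inAdd X.property ((homFunctor_map_eq_iff T _ _).1 h)

noncomputable def biproductHomEquiv (T : C) (n : ℕ) :
    (T ⟶ ⨁ fun _ : Fin n => T) ≃ₗ[(End T)ᵐᵒᵖ] (Fin n → (End T)ᵐᵒᵖ) where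
  toFun t i := .op (t ≫ biproduct.π _ i)
  invFun v := biproduct.lift fun i => (v i).unop
  map_add' t t' := by ext; simp
  map_smul' a t := by
    ext i
    apply MulOpposite.unop_injective
    exact Category.assoc _ _ _
  left_inv t := by ext; simp
  right_inv v := by ext; simp

lemma module_projective_hom_of_inAdd {T X : C} (hX : inAdd T X) :
    Module.Projective (End T)ᵐᵒᵖ (T ⟶ X) := by
  obtain ⟨n, s, r, hsr⟩ := hX
  refine Module.Projective.of_split
    ((biproductHomEquiv T n).toLinearMap ∘ₗ postcompLinearMap T s)
    (postcompLinearMap T r ∘ₗ (biproductHomEquiv T n).symm.toLinearMap) ?_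
  ext t
  simp [hsr]

lemma exists_inAdd_hom_linearEquiv_of_projective [IsIdempotentComplete C] (T : C) (M : Type v)
    [AddCommGroup M] [Module (End T)ᵐᵒᵖ M] [Module.Finite (End T)ᵐᵒᵖ M]
    [Module.Projective (End T)ᵐᵒᵖ M] :
    ∃ Y : C, inAdd T Y ∧ Nonempty ((T ⟶ Y) ≃ₗ[(End T)ᵐᵒᵖ] M) := by
  obtain ⟨n, σ, hσ⟩ := Module.Finite.exists_fin' (End T)ᵐᵒᵖ M
  obtain ⟨s, hs⟩ := Module.projective_lifting_property σ LinearMap.id hσ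
  have hσs (x : M) : σ (s x) = x := LinearMap.congr_fun hs x
  let en := biproductHomEquiv T n
  obtain ⟨e, he⟩ := exists_comp_eq_of_inAdd (inAdd_biproduct T n)
    (en.symm.toLinearMap ∘ₗ s ∘ₗ σ ∘ₗ en.toLinearMap)
  have hee : e ≫ e = e := ext_of_inAdd (inAdd_biproduct T n) fun t => by
    simp [← Category.assoc, he, hσs]
  obtain ⟨Y, i, r, hir, hri⟩ := IsIdempotentComplete.idempotents_split _ e hee
  refine ⟨Y, ⟨n, i, r, hir⟩, ⟨LinearEquiv.ofLinearMap (σ ∘ₗ en.toLinearMap ∘ₗ postcompLinearMap T i)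
    (postcompLinearMap T r ∘ₗ en.symm.toLinearMap ∘ₗ s) ?_ ?_⟩⟩
  · ext x
    simp [hri, he, hσs]
  · ext t
    have hier : i ≫ e ≫ r = 𝟙 Y := by rw [← hri, Category.assoc, reassoc_of% hir, hir]
    have het := he (t ≫ i)
    simp only [LinearMap.comp_apply, LinearEquiv.coe_coe] at het
    simp [← het, hier]

end Additive

section FiniteDimensional

variable (k : Type*) [Field k] {C : Type u} [Category.{v} C] [Preadditive C] [Linear k C]
  [∀ X Y : C, FiniteDimensional k (X ⟶ Y)]

include k

lemma isNoetherianRing_endMop (T : C) : IsNoetherianRing (End T)ᵐᵒᵖ :=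
  have : FiniteDimensional k (End T) := inferInstanceAs (FiniteDimensional k (T ⟶ T))
  isNoetherian_of_tower k inferInstance

variable [HasFiniteBiproducts C]

lemma exists_biproduct_approximation (T X : C) :
    ∃ (n : ℕ) (q : (⨁ fun _ : Fin n => T) ⟶ X), ∀ t : T ⟶ X, ∃ u, u ≫ q = t := by
  let b := Module.finBasis k (T ⟶ X)
  refine ⟨_, biproduct.desc b, fun t => ⟨biproduct.lift fun i => b.repr t i • 𝟙 T, ?_⟩⟩
  simp [biproduct.lift_desc, b.sum_repr]

lemma module_finite_hom (T X : C) : Module.Finite (End T)ᵐᵒᵖ (T ⟶ X) := by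
  obtain ⟨n, q, hq⟩ := exists_biproduct_approximation k T X
  exact Module.Finite.of_surjective
    (postcompLinearMap T q ∘ₗ (biproductHomEquiv T n).symm.toLinearMap) fun t => by
      obtain ⟨u, rfl⟩ := hq t
      exact ⟨biproductHomEquiv T n u, by simp⟩

end FiniteDimensional

section Triangulated

variable {k : Type*} [Field k] {C : Type u} [Category.{v} C] [Preadditive C] [Linear k C]
  [HasShift C ℤ]

/-- Serre duality makes `Hom(Y, X⟦1⟧)` dual to `Hom(X⟦1⟧, S Y) ≅ Hom(X⟦1⟧, Y⟦2⟧) ≅ Hom(X, Y⟦1⟧)`. -/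
lemma IsCY2.eq_zero_of_forall_eq_zero {S : SerreData k C} (hCY : IsCY2 k C S) {X Y : C}
    (hXY : ∀ g : X ⟶ Y⟦(1 : ℤ)⟧, g = 0) (f : Y ⟶ X⟦(1 : ℤ)⟧) : f = 0 := by
  obtain ⟨η⟩ := hCY
  let e : S.Fun.obj Y ≅ Y⟦(1 : ℤ)⟧⟦(1 : ℤ)⟧ :=
    η.symm.app Y ≪≫ (shiftFunctorAdd' C 1 1 2 (by norm_num)).app Y
  have hzero : ∀ g : X⟦(1 : ℤ)⟧ ⟶ S.Fun.obj Y, g = 0 := fun g => by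
    obtain ⟨g', hg'⟩ := (shiftFunctor C (1 : ℤ)).map_surjective (g ≫ e.hom)
    rw [← cancel_mono e.hom, zero_comp, ← hg', hXY g', Functor.map_zero]
  apply (S.eta Y (X⟦(1 : ℤ)⟧)).injective
  ext g
  simp [hzero g]

variable [HasZeroObject C] [∀ n : ℤ, (shiftFunctor C n).Additive] [Pretriangulated C]
  [HasFiniteBiproducts C] {T : C}

lemma exists_distTriang_of_isClusterTilting [∀ X Y : C, FiniteDimensional k (X ⟶ Y)]
    {S : SerreData k C} (hCY : IsCY2 k C S) (hT : IsClusterTilting T) (X : C) :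
    ∃ (W : C) (n : ℕ) (f : W ⟶ ⨁ fun _ : Fin n => T) (q : (⨁ fun _ : Fin n => T) ⟶ X)
      (h : X ⟶ W⟦(1 : ℤ)⟧), Triangle.mk f q h ∈ distTriang C ∧ inAdd T W ∧
        ∀ t : T ⟶ X, ∃ u, u ≫ q = t := by
  obtain ⟨n, q, hq⟩ := exists_biproduct_approximation k T X
  obtain ⟨W, f, h, hdist⟩ := distinguished_cocone_triangle₁ q
  refine ⟨W, n, f, q, h, hdist, hT.2 W (hCY.eq_zero_of_forall_eq_zero fun g => ?_), hq⟩
  have hg : g ≫ f⟦(1 : ℤ)⟧' = 0 :=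
    eq_zero_of_inAdd hT.1 ((inAdd_biproduct T n).map (shiftFunctor C (1 : ℤ))) _
  obtain ⟨t, rfl⟩ := Triangle.coyoneda_exact₁ _ hdist g hg
  obtain ⟨u, rfl⟩ := hq t
  have hqh : q ≫ h = 0 := comp_distTriang_mor_zero₂₃ _ hdist
  exact (Category.assoc u q h).trans (by rw [hqh, comp_zero])

lemma homFunctor_full [∀ X Y : C, FiniteDimensional k (X ⟶ Y)] {S : SerreData k C}
    (hCY : IsCY2 k C S) (hT : IsClusterTilting T) : (homFunctor T).Full where
  map_surjective {X Y} φ := by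
    obtain ⟨W, n, f, q, h, hdist, hW, hq⟩ := exists_distTriang_of_isClusterTilting hCY hT X
    let φ' : (T ⟶ X) →ₗ[(End T)ᵐᵒᵖ] (T ⟶ Y) := φ.hom
    obtain ⟨g₀, hg₀⟩ := exists_comp_eq_of_inAdd (inAdd_biproduct T n) (φ' ∘ₗ postcompLinearMap T q)
    have hfq : f ≫ q = 0 := comp_distTriang_mor_zero₁₂ _ hdist
    have hfg₀ : f ≫ g₀ = 0 := ext_of_inAdd hW fun t => by
      rw [comp_zero, ← Category.assoc, hg₀, LinearMap.comp_apply, postcompLinearMap_apply,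
        Category.assoc, hfq, comp_zero, map_zero]
    obtain ⟨g, rfl⟩ := Triangle.yoneda_exact₂ _ hdist g₀ hfg₀
    refine ⟨g, ?_⟩
    ext t
    obtain ⟨u, rfl⟩ := hq t
    exact (Category.assoc _ _ _).trans (hg₀ u)

lemma addSTRel_iff_homFunctor_map_eq [∀ X Y : C, FiniteDimensional k (X ⟶ Y)] {S : SerreData k C}
    (hCY : IsCY2 k C S) (hT : IsClusterTilting T) {X Y : C} (f g : X ⟶ Y) :
    addSTRel T f g ↔ (homFunctor T).map f = (homFunctor T).map g := by
  rw [homFunctor_map_eq_iff]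
  constructor
  · rintro ⟨Z, u, v, hZ, huv⟩ t
    rw [← sub_eq_zero, ← Preadditive.comp_sub, ← huv, ← Category.assoc,
      eq_zero_of_inAdd hT.1 hZ (t ≫ u), zero_comp]
  · intro hfg
    obtain ⟨W, n, f₀, q, h, hdist, hW, -⟩ := exists_distTriang_of_isClusterTilting hCY hT X
    have hq : q ≫ (f - g) = 0 := ext_of_inAdd (inAdd_biproduct T n) fun u => by
      simp [Preadditive.comp_sub, ← Category.assoc, hfg]
    obtain ⟨v, hv⟩ := Triangle.yoneda_exact₃ _ hdist (f - g) hq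
    exact ⟨_, h, v, hW.map (shiftFunctor C (1 : ℤ)), hv.symm⟩

lemma exists_hom_linearEquiv_of_finite [∀ X Y : C, FiniteDimensional k (X ⟶ Y)]
    (hT : IsClusterTilting T) (M : Type v) [AddCommGroup M] [Module (End T)ᵐᵒᵖ M]
    [Module.Finite (End T)ᵐᵒᵖ M] : ∃ X : C, Nonempty ((T ⟶ X) ≃ₗ[(End T)ᵐᵒᵖ] M) := by
  have := isNoetherianRing_endMop k T
  have := Module.finitePresentation_of_finite (End T)ᵐᵒᵖ M
  obtain ⟨n, m, π, δ, hπ, hexact⟩ := Module.FinitePresentation.exists_fin' (End T)ᵐᵒᵖ M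
  let en := biproductHomEquiv T n
  let em := biproductHomEquiv T m
  obtain ⟨p, hp⟩ := exists_comp_eq_of_inAdd (inAdd_biproduct T m)
    (en.symm.toLinearMap ∘ₗ δ ∘ₗ em.toLinearMap)
  obtain ⟨X, q, h, hdist⟩ := distinguished_cocone_triangle p
  refine ⟨X, LinearMap.nonempty_linearEquiv_of_ker_eq (postcompLinearMap T q)
    (π ∘ₗ en.toLinearMap) (fun t => ?_) (hπ.comp en.surjective) ?_⟩
  · have hth : t ≫ h = 0 :=
      eq_zero_of_inAdd hT.1 ((inAdd_biproduct T m).map (shiftFunctor C (1 : ℤ))) _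
    obtain ⟨u, rfl⟩ := Triangle.coyoneda_exact₃ _ hdist t hth
    exact ⟨u, rfl⟩
  · ext u
    have hpq : p ≫ q = 0 := comp_distTriang_mor_zero₁₂ _ hdist
    calc u ∈ LinearMap.ker (postcompLinearMap T q) ↔ ∃ w, u = w ≫ p := by
          refine ⟨fun hu => Triangle.coyoneda_exact₂ _ hdist u hu, ?_⟩
          rintro ⟨w, rfl⟩
          simp [hpq]
      _ ↔ en u ∈ LinearMap.range δ := by
          simp only [hp, LinearMap.mem_range, LinearMap.comp_apply, LinearEquiv.coe_coe]
          constructor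
          · rintro ⟨w, rfl⟩
            exact ⟨em w, by simp⟩
          · rintro ⟨v, hv⟩
            exact ⟨em.symm v, by simp [hv]⟩
      _ ↔ u ∈ LinearMap.ker (π ∘ₗ en.toLinearMap) := (hexact (en u)).symm

end Triangulated

/-- **Theorem (Keller–Reiten).** Let `C` be a 2-Calabi–Yau triangulated category with a
cluster-tilting object `T` and `Γ = End_C(T)`. The functor `F = Hom_C(T,−) : C → mod Γ`
induces an equivalence `C / add(ST) ≃ mod Γ`; moreover `F` induces an equivalence from
`add T` to the category of projective modules in `mod Γ`. -/
theorem quotient_equivalence_mod_and_projectives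
    {k : Type*} [Field k] [IsAlgClosed k]
    {C : Type u} [Category.{v} C] [Preadditive C] [Linear k C]
    [HasZeroObject C] [HasShift C ℤ] [∀ n : ℤ, (shiftFunctor C n).Additive]
    [Pretriangulated C] [IsTriangulated C]
    [IsIdempotentComplete C] [HasFiniteBiproducts C]
    [∀ X Y : C, FiniteDimensional k (X ⟶ Y)]
    (S : SerreData k C) (hCY : IsCY2 k C S)
    (T : C) (hT : IsClusterTilting T) :
    (∃ Fbar : CategoryTheory.Quotient (addSTRel T) ⥤
        ObjectProperty.FullSubcategory (fun M : ModuleCat.{v} (End T)ᵐᵒᵖ => Module.Finite (End T)ᵐᵒᵖ M),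
      Nonempty (CategoryTheory.Quotient.functor (addSTRel T) ⋙ Fbar ⋙
          ObjectProperty.ι _ ≅ homFunctor T) ∧ Fbar.IsEquivalence) ∧
    (∃ Fp : ObjectProperty.FullSubcategory (fun X : C => inAdd T X) ⥤
        ObjectProperty.FullSubcategory (fun M : ModuleCat.{v} (End T)ᵐᵒᵖ =>
          Module.Finite (End T)ᵐᵒᵖ M ∧ Module.Projective (End T)ᵐᵒᵖ M),
      Nonempty (Fp ⋙ ObjectProperty.ι _ ≅
          ObjectProperty.ι (fun X : C => inAdd T X) ⋙ homFunctor T) ∧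
      Fp.IsEquivalence) := by
  have hfin (X : C) : Module.Finite (End T)ᵐᵒᵖ ((homFunctor T).obj X) := module_finite_hom k T X
  have := homFunctor_full hCY hT
  let G := ObjectProperty.lift (fun M : ModuleCat.{v} (End T)ᵐᵒᵖ => Module.Finite (End T)ᵐᵒᵖ M)
    (homFunctor T) hfin
  have : G.EssSurj := essSurj_lift_of_exists_iso _ _ _ fun M _ =>
    have ⟨X, ⟨e⟩⟩ := exists_hom_linearEquiv_of_finite (k := k) hT M
    ⟨X, ⟨e.toModuleIso⟩⟩
  obtain ⟨Fbar, ⟨e⟩, hFbar⟩ := exists_isEquivalence_quotient_lift (addSTRel T) G fun _ _ f g =>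
    (addSTRel_iff_homFunctor_map_eq hCY hT f g).trans ⟨fun h => ObjectProperty.hom_ext _ h,
      congrArg (ObjectProperty.ι _).map⟩
  refine ⟨⟨Fbar, ⟨(Functor.associator _ _ _).symm ≪≫ Functor.isoWhiskerRight e _ ≪≫
    ObjectProperty.liftCompιIso _ _ _⟩, hFbar⟩, ?_⟩
  let Fp := ObjectProperty.lift (fun M : ModuleCat.{v} (End T)ᵐᵒᵖ =>
      Module.Finite (End T)ᵐᵒᵖ M ∧ Module.Projective (End T)ᵐᵒᵖ M)
    (ObjectProperty.ι (fun X : C => inAdd T X) ⋙ homFunctor T) fun X =>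
    ⟨hfin X.obj, module_projective_hom_of_inAdd X.property⟩
  have : Fp.EssSurj := essSurj_lift_of_exists_iso _ _ _ fun M ⟨_, _⟩ =>
    have ⟨Y, hY, ⟨e⟩⟩ := exists_inAdd_hom_linearEquiv_of_projective T M
    ⟨⟨Y, hY⟩, ⟨e.toModuleIso⟩⟩
  exact ⟨Fp, ⟨ObjectProperty.liftCompιIso _ _ _⟩, { }⟩

end CYPaper
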